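/- Fix κ² > 0. Let θ : [−π, π] → ℝ be C¹ with θ(π) = θ(−π) (degree-one class). Then ∫_{−π}^{π} ( |θ'(t) + 1|² + κ² sin²θ(t) ) dt ≥ 2π, with equality if and only if θ is constant and sin θ = 0, i.e., if and only if the corresponding in-plane map is m_⊥ = n or m_⊥ = −n. -/

import Mathlib

/-!
Expanding the square, `(θ' + 1)² + κ² sin²θ = (θ'² + κ² sin²θ) + 2θ' + 1`, and `∫ θ' = 0` by
periodicity, so the energy is `2π` plus the integral of the continuous nonnegative function
`θ'² + κ² sin²θ`. That integral vanishes iff `θ' = 0` and `sin θ = 0` on all of `[-π, π]`,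
i.e. iff `θ` is a constant in `πℤ`.
-/

open Real Set MeasureTheory

section
variable {f : ℝ → ℝ} {a b : ℝ}

theorem eqOn_zero_of_integral_eq_zero (hab : a < b) (hf : ContinuousOn f (Icc a b))
    (hf₀ : ∀ x ∈ Icc a b, 0 ≤ f x) (hint : ∫ x in a..b, f x = 0) : EqOn f 0 (Icc a b) := by
  intro x hx
  by_contra hne
  have hpos := intervalIntegral.integral_pos hab hf (fun y hy => hf₀ y (Ioc_subset_Icc_self hy))
    ⟨x, hx, (hf₀ x hx).lt_of_ne' hne⟩
  exact hpos.ne' hint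

theorem eq_of_deriv_eq_zero_on_Icc (hf : Differentiable ℝ f)
    (hf' : ∀ x ∈ Icc a b, deriv f x = 0) : ∀ x ∈ Icc a b, f x = f a :=
  constant_of_has_deriv_right_zero hf.continuous.continuousOn fun x hx =>
    hf' x (Ico_subset_Icc_self hx) ▸ (hf x).hasDerivAt.hasDerivWithinAt

theorem deriv_eq_zero_of_eq_const_on_Icc {c : ℝ} (hab : a < b) (hf : Differentiable ℝ f)
    (hc : ∀ x ∈ Icc a b, f x = c) : ∀ x ∈ Icc a b, deriv f x = 0 := by
  intro x hx
  rw [← (hf x).derivWithin (uniqueDiffOn_Icc hab x hx),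
    derivWithin_congr (f := fun _ => c) hc (hc x hx), derivWithin_fun_const, Pi.zero_apply]

end

section
variable (κ : ℝ) {θ : ℝ → ℝ} {a b : ℝ}

theorem integral_deriv_add_one_sq_add_sin_sq (hθ : ContDiff ℝ 1 θ) (hper : θ b = θ a) :
    ∫ t in a..b, ((deriv θ t + 1) ^ 2 + κ ^ 2 * sin (θ t) ^ 2)
      = (∫ t in a..b, (deriv θ t ^ 2 + κ ^ 2 * sin (θ t) ^ 2)) + (b - a) := by
  have hθ' : Continuous (deriv θ) := hθ.continuous_deriv le_rfl
  have hint : ∫ t in a..b, deriv θ t = 0 := by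
    rw [intervalIntegral.integral_deriv_eq_sub (fun x _ => hθ.differentiable one_ne_zero x)
      (hθ'.intervalIntegrable _ _), hper, sub_self]
  have hexpand : (fun t => (deriv θ t + 1) ^ 2 + κ ^ 2 * sin (θ t) ^ 2)
      = fun t => (deriv θ t ^ 2 + κ ^ 2 * sin (θ t) ^ 2) + 2 * deriv θ t + 1 := by
    ext t; ring
  have hg : Continuous fun t => deriv θ t ^ 2 + κ ^ 2 * sin (θ t) ^ 2 := by
    have := hθ.continuous; fun_prop
  have hg2 : IntervalIntegrable (fun t => (deriv θ t ^ 2 + κ ^ 2 * sin (θ t) ^ 2)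
      + 2 * deriv θ t) volume a b := ((hg.add (hθ'.const_mul 2)).intervalIntegrable _ _)
  rw [hexpand, intervalIntegral.integral_add hg2 intervalIntegrable_const,
    intervalIntegral.integral_add (hg.intervalIntegrable _ _)
      ((hθ'.const_mul 2).intervalIntegrable _ _), intervalIntegral.integral_const_mul, hint]
  simp

theorem integral_deriv_sq_add_sin_sq_eq_zero_iff (hκ : κ ≠ 0) (hab : a < b)
    (hθ : ContDiff ℝ 1 θ) :
    ∫ t in a..b, (deriv θ t ^ 2 + κ ^ 2 * sin (θ t) ^ 2) = 0 ↔
      ∃ c, (∀ t ∈ Icc a b, θ t = c) ∧ sin c = 0 := by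
  have hθd : Differentiable ℝ θ := hθ.differentiable one_ne_zero
  constructor
  · intro hint
    have hg : Continuous fun t => deriv θ t ^ 2 + κ ^ 2 * sin (θ t) ^ 2 := by
      have := hθ.continuous; have := hθ.continuous_deriv le_rfl; fun_prop
    have hzero := eqOn_zero_of_integral_eq_zero hab hg.continuousOn
      (fun t _ => by positivity) hint
    have hparts : ∀ t ∈ Icc a b, deriv θ t = 0 ∧ sin (θ t) = 0 := fun t ht => by
      have h := hzero ht
      simp only [Pi.zero_apply] at h
      have hd : deriv θ t ^ 2 = 0 := by nlinarith [sq_nonneg (κ * sin (θ t))]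
      have hs : (κ * sin (θ t)) ^ 2 = 0 := by nlinarith [sq_nonneg (deriv θ t)]
      exact ⟨pow_eq_zero_iff two_ne_zero |>.mp hd,
        (mul_eq_zero.mp (pow_eq_zero_iff two_ne_zero |>.mp hs)).resolve_left hκ⟩
    exact ⟨θ a, eq_of_deriv_eq_zero_on_Icc hθd fun t ht => (hparts t ht).1,
      (hparts a (left_mem_Icc.mpr hab.le)).2⟩
  · rintro ⟨c, hc, hsin⟩
    have hderiv := deriv_eq_zero_of_eq_const_on_Icc hab hθd hc
    rw [intervalIntegral.integral_congr (g := fun _ => 0) fun t ht => by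
      rw [uIcc_of_le hab.le] at ht
      simp [hderiv t ht, hc t ht, hsin]]
    exact intervalIntegral.integral_zero

end

/-- **Degree-one in-plane lower bound**: for `C¹` `θ` with `θ(π) = θ(−π)`,
`∫_{−π}^{π} (|θ' + 1|² + κ² sin²θ) dt ≥ 2π`, with equality if and only if `θ` is
constant on `[−π, π]` with `sin θ = 0` (i.e. the corresponding in-plane map is
`±n`). -/
theorem degree_one_inplane_bound
    (κ : ℝ) (hκ : 0 < κ ^ 2)
    (θ : ℝ → ℝ) (hθ : ContDiff ℝ 1 θ)
    (hdeg : θ π = θ (-π)) :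
    2 * π ≤ ∫ t in (-π)..π, ((deriv θ t + 1) ^ 2 + κ ^ 2 * Real.sin (θ t) ^ 2) ∧
    ((∫ t in (-π)..π, ((deriv θ t + 1) ^ 2 + κ ^ 2 * Real.sin (θ t) ^ 2)) = 2 * π ↔
      ∃ c : ℝ, (∀ t ∈ Icc (-π) π, θ t = c) ∧ Real.sin c = 0) := by
  have hπ : -π < π := by linarith [pi_pos]
  have hκ₀ : κ ≠ 0 := (pow_ne_zero_iff two_ne_zero).mp hκ.ne'
  rw [integral_deriv_add_one_sq_add_sin_sq κ hθ hdeg,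
    ← integral_deriv_sq_add_sin_sq_eq_zero_iff κ hκ₀ hπ hθ]
  have hnonneg : 0 ≤ ∫ t in (-π)..π, (deriv θ t ^ 2 + κ ^ 2 * sin (θ t) ^ 2) :=
    intervalIntegral.integral_nonneg hπ.le fun t _ => by positivity
  constructor
  · linarith
  · constructor <;> intro h <;> linarith
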